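/- For every real x > 0 and every integer m ≥ 1, one has (x/(2m²(1+√x)³))·(1+√x)^{2m} ≤ β_m(x) ≤ (1+√x)^{2m}. -/

import Mathlib

open MeasureTheory ProbabilityTheory Matrix
open scoped NNReal ENNReal

noncomputable section

/-- Borel measurable structure on complex Euclidean space. -/
instance euclideanMeasurableSpaceC (ι : Type*) [Fintype ι] :
    MeasurableSpace (EuclideanSpace ℂ ι) := MeasurableSpace.comap WithLp.ofLp MeasurableSpace.pi

instance euclideanBorelSpaceC (ι : Type*) [Fintype ι] :
    BorelSpace (EuclideanSpace ℂ ι) := PiLp.borelSpace 2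

/-- Lebesgue (Haar) measure on complex Euclidean space. -/
instance euclideanMeasureSpaceC (ι : Type*) [Fintype ι] :
    MeasureSpace (EuclideanSpace ℂ ι) :=
  @MeasureSpace.mk _ (euclideanMeasurableSpaceC ι)
    (@Measure.map _ _ _ (euclideanMeasurableSpaceC ι) (WithLp.toLp 2) (Measure.pi fun _ => volume))

/-- The uniform probability measure on the unit sphere of `ℂ^ι`, viewed as a measure on the
ambient space: the normalized polar-decomposition (cone) measure of the Lebesgue (Haar) measure,
which is the unique rotation-invariant probability measure on the unit sphere. -/
def sphereUniform (ι : Type*) [Fintype ι] : Measure (EuclideanSpace ℂ ι) :=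
  Measure.map Subtype.val
    ((((volume : Measure (EuclideanSpace ℂ ι)).toSphere) Set.univ)⁻¹ •
      (volume : Measure (EuclideanSpace ℂ ι)).toSphere)

/-- The rank-one matrix `|v⟩⟨v|`, with entries `(i,j) ↦ v i * conj (v j)`. -/
def rankOne {n : Type*} [Fintype n] (v : n → ℂ) : Matrix n n ℂ :=
  Matrix.vecMulVec v (star v)

/-- The operator norm (largest singular value) of a complex matrix; for a positive semidefinite
matrix this is its largest eigenvalue. -/
def opNorm {n : Type*} [Fintype n] [DecidableEq n] (A : Matrix n n ℂ) : ℝ :=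
  ‖Matrix.toEuclideanCLM (𝕜 := ℂ) (n := n) A‖

/-- The elementary tensor `v 0 ⊗ ⋯ ⊗ v (k-1)` as a vector of `(ℂ^d)^{⊗k}`,
indexed by `Fin k → Fin d`. -/
def tensorVec {d k : ℕ} (v : Fin k → EuclideanSpace ℂ (Fin d)) : (Fin k → Fin d) → ℂ :=
  fun x => ∏ j, v j (x j)

/-- `M_{p,d,k} = ∑_s |φ_s⟩⟨φ_s|` for the product vectors `φ_s = φ_s^1 ⊗ ⋯ ⊗ φ_s^k`. -/
def ensMatrix {p d k : ℕ} (φ : Fin p → Fin k → EuclideanSpace ℂ (Fin d)) :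
    Matrix (Fin k → Fin d) (Fin k → Fin d) ℂ :=
  ∑ s, rankOne (tensorVec (φ s))

/-- `E_{p,d,k}^m = 𝔼[tr (M_{p,d,k}^m)]` (the trace is a nonnegative real, so we take
the real part). -/
def traceMoment {p d k : ℕ} {Ω : Type} [MeasureSpace Ω]
    (φ : Fin p → Fin k → Ω → EuclideanSpace ℂ (Fin d)) (m : ℕ) : ℝ :=
  ∫ ω, (Matrix.trace ((ensMatrix (fun s j => φ s j ω)) ^ m)).re

/-- `e_{p,d,k}^m = d^{-k}·E_{p,d,k}^m`.  (For `m = 0` this automatically equals `1`.) -/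
def nTraceMoment {p d k : ℕ} {Ω : Type} [MeasureSpace Ω]
    (φ : Fin p → Fin k → Ω → EuclideanSpace ℂ (Fin d)) (m : ℕ) : ℝ :=
  traceMoment φ m / (d : ℝ) ^ k

/-- The `φ s j`, `s ∈ [p]`, `j ∈ [k]`, are independent random vectors, each uniformly
distributed on the unit sphere of `ℂ^d`. -/
def IsUniformEnsemble {p d k : ℕ} {Ω : Type} [MeasureSpace Ω]
    (φ : Fin p → Fin k → Ω → EuclideanSpace ℂ (Fin d)) : Prop :=
  (∀ s j, Measurable (φ s j)) ∧
  iIndepFun (fun sj : Fin p × Fin k => φ sj.1 sj.2) ℙ ∧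
  (∀ s j, Measure.map (φ s j) ℙ = sphereUniform (Fin d))

/-- The `2d` real coordinates of a vector of `ℂ^d`. -/
def realCoord {d : ℕ} (v : EuclideanSpace ℂ (Fin d)) (i : Fin d) (b : Bool) : ℝ :=
  if b then (v i).im else (v i).re

/-- The `φ s j`, `s ∈ [p]`, `j ∈ [k]`, are independent Gaussian vectors in `ℂ^d`: all of their
`2d·p·k` real coordinates are i.i.d. centered real Gaussians of variance `1/(2d)`. -/
def IsGaussianEnsemble {p d k : ℕ} {Ω : Type} [MeasureSpace Ω]
    (φ : Fin p → Fin k → Ω → EuclideanSpace ℂ (Fin d)) : Prop :=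
  (∀ s j, Measurable (φ s j)) ∧
  iIndepFun
    (fun q : Fin p × Fin k × Fin d × Bool =>
      fun ω => realCoord (φ q.1 q.2.1 ω) q.2.2.1 q.2.2.2) ℙ ∧
  (∀ s j i b, Measure.map (fun ω => realCoord (φ s j ω) i b) ℙ
      = gaussianReal 0 (1 / (2 * (d : ℝ≥0))))

/-- Narayana number `N(m,ℓ) = (1/m)·C(m,ℓ-1)·C(m,ℓ)`. -/
def narayana (m ℓ : ℕ) : ℝ := ((m.choose (ℓ - 1)) * (m.choose ℓ) : ℝ) / m

/-- `β_m(x) = ∑_{ℓ=1}^m N(m,ℓ)·x^ℓ`. -/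
def betaPoly (m : ℕ) (x : ℝ) : ℝ := ∑ ℓ ∈ Finset.Icc 1 m, narayana m ℓ * x ^ ℓ

/-- `𝔼[‖M_{p,d,k}‖]`, the expected operator norm. -/
def expOpNorm {p d k : ℕ} {Ω : Type} [MeasureSpace Ω]
    (φ : Fin p → Fin k → Ω → EuclideanSpace ℂ (Fin d)) : ℝ :=
  ∫ ω, opNorm (ensMatrix (fun s j => φ s j ω))

/-- `E_d[s⃗] = 𝔼[tr(φ_{s_1} φ_{s_2} ⋯ φ_{s_m})]` (a nonnegative real; we take the real part). -/
def stringE {p d m : ℕ} {Ω : Type} [MeasureSpace Ω]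
    (φ : Fin p → Ω → EuclideanSpace ℂ (Fin d)) (s : Fin m → Fin p) : ℝ :=
  ∫ ω, (Matrix.trace (List.ofFn fun i => rankOne (φ (s i) ω)).prod).re

/-- `φ_1,…,φ_p` are independent random vectors, each uniformly distributed on the unit
sphere of `ℂ^d`. -/
def IsUniformLetters {p d : ℕ} {Ω : Type} [MeasureSpace Ω]
    (φ : Fin p → Ω → EuclideanSpace ℂ (Fin d)) : Prop :=
  (∀ s, Measurable (φ s)) ∧
  iIndepFun φ ℙ ∧
  (∀ s, Measure.map (φ s) ℙ = sphereUniform (Fin d))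

/-- `φ_1,…,φ_p` are independent Gaussian vectors in `ℂ^d`: all of their `2d·p` real
coordinates are i.i.d. centered real Gaussians of variance `1/(2d)`. -/
def IsGaussianLetters {p d : ℕ} {Ω : Type} [MeasureSpace Ω]
    (φ : Fin p → Ω → EuclideanSpace ℂ (Fin d)) : Prop :=
  (∀ s, Measurable (φ s)) ∧
  iIndepFun
    (fun q : Fin p × Fin d × Bool => fun ω => realCoord (φ q.1 ω) q.2.1 q.2.2) ℙ ∧
  (∀ s i b, Measure.map (fun ω => realCoord (φ s ω) i b) ℙ
      = gaussianReal 0 (1 / (2 * (d : ℝ≥0))))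

/-- One reduction step on strings (as lists): delete one of two equal cyclically adjacent
letters, or delete a letter that occurs exactly once in the string. -/
inductive RedStep {α : Type*} : List α → List α → Prop
  | adj (l₁ : List α) (a : α) (l₂ : List α) : RedStep (l₁ ++ a :: a :: l₂) (l₁ ++ a :: l₂)
  | headLast₁ (a : α) (l : List α) : RedStep (a :: (l ++ [a])) (a :: l)
  | headLast₂ (a : α) (l : List α) : RedStep (a :: (l ++ [a])) (l ++ [a])
  | unique (l₁ : List α) (a : α) (l₂ : List α) (h : a ∉ l₁ ++ l₂) :
      RedStep (l₁ ++ a :: l₂) (l₁ ++ l₂)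

/-- A string is completely reducible if it can be transformed into the empty string by
repeatedly applying the two reduction operations. -/
def CompletelyReducible {α : Type*} (l : List α) : Prop :=
  Relation.ReflTransGen RedStep l List.nil

/-- A string is irreducible if no two cyclically adjacent letters are equal and every letter
occurring in it occurs at least twice. -/
def IrreducibleString {p m : ℕ} (hm : 0 < m) (s : Fin m → Fin p) : Prop :=
  (∀ i : Fin m, s i ≠ s ⟨(i.val + 1) % m, Nat.mod_lt _ hm⟩) ∧
  (∀ a : Fin p, (∃ i, s i = a) → 2 ≤ (Finset.univ.filter fun i => s i = a).card)

/-- The number of cycles (orbits, including fixed points) of a permutation of `Fin m`. -/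
def cycCount {m : ℕ} (ν : Equiv.Perm (Fin m)) : ℕ :=
  ν.cycleType.card + (m - ν.support.card)

/-- `E_{p,d,1}^m = 𝔼[tr(M_{p,d,1}^m)]` for the `k = 1` ensemble. -/
def letterTraceMoment {p d : ℕ} {Ω : Type} [MeasureSpace Ω]
    (φ : Fin p → Ω → EuclideanSpace ℂ (Fin d)) (m : ℕ) : ℝ :=
  ∫ ω, (Matrix.trace ((∑ s, rankOne (φ s ω)) ^ m)).re

/-- `e_{p,d,1}^m = d⁻¹·E_{p,d,1}^m`.  (For `m = 0` this automatically equals `1`.) -/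
def nLetterTraceMoment {p d : ℕ} {Ω : Type} [MeasureSpace Ω]
    (φ : Fin p → Ω → EuclideanSpace ℂ (Fin d)) (m : ℕ) : ℝ :=
  letterTraceMoment φ m / d

/-- The partial trace over the second factor of `|ψ⟩⟨ψ|`, for `ψ ∈ ℂ^{d_A} ⊗ ℂ^{d_B}`. -/
def ptraceB {dA dB : ℕ} (v : EuclideanSpace ℂ (Fin dA × Fin dB)) :
    Matrix (Fin dA) (Fin dA) ℂ :=
  Matrix.of fun i i' => ∑ b, v (i, b) * star (v (i', b))

/-- The tensor product of `k` matrices of size `d × d`, indexed by `Fin k → Fin d`. -/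
def tensorMat {d k : ℕ} (A : Fin k → Matrix (Fin d) (Fin d) ℂ) :
    Matrix (Fin k → Fin d) (Fin k → Fin d) ℂ :=
  Matrix.of fun x y => ∏ j, A j (x j) (y j)

end

noncomputable section

/-!
With `t = √x`, the Narayana numbers are squeezed between squared binomial coefficients,
`C(m-1,ℓ-1)² ≤ m·N(m,ℓ)` and `N(m,ℓ) ≤ C(m,ℓ)²`. So `β_m(x)` is compared with sums of squares of
the terms `C(n,k)·tᵏ` of `(1+t)ⁿ`: from above, a sum of squares of nonnegative terms is at most
the square of the sum, giving `β_m(x) ≤ (1+t)^{2m}`; from below, Cauchy–Schwarz gives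
`x·(1+t)^{2m-2} ≤ m²·β_m(x)`, which implies the claimed bound because `(1+t)² ≤ 2(1+t)³`.
-/

open Finset

theorem Nat.choose_pred_mul_choose_le (m ℓ : ℕ) (hm : 1 ≤ m) :
    m.choose (ℓ - 1) * m.choose ℓ ≤ m * m.choose ℓ ^ 2 := by
  rcases ℓ with _ | k
  · simpa using hm
  rcases lt_or_ge k m with hk | hk
  · have hpred : m.choose k ≤ m * m.choose (k + 1) :=
      calc m.choose k ≤ m.choose k * (m - k) := Nat.le_mul_of_pos_right _ (by omega)
        _ = m.choose (k + 1) * (k + 1) := (Nat.choose_succ_right_eq m k).symm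
        _ ≤ m * m.choose (k + 1) := by rw [mul_comm]; exact Nat.mul_le_mul_right _ hk
    calc m.choose (k + 1 - 1) * m.choose (k + 1) ≤ m * m.choose (k + 1) * m.choose (k + 1) :=
          Nat.mul_le_mul_right _ hpred
      _ = m * m.choose (k + 1) ^ 2 := by ring
  · simp [Nat.choose_eq_zero_of_lt (Nat.lt_succ_of_le hk)]

theorem narayana_le_choose_sq (m ℓ : ℕ) : narayana m ℓ ≤ (m.choose ℓ : ℝ) ^ 2 := by
  rcases Nat.eq_zero_or_pos m with rfl | hm
  · simp [narayana]
  rw [narayana, div_le_iff₀ (by exact_mod_cast hm)]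
  exact_mod_cast (Nat.choose_pred_mul_choose_le m ℓ hm).trans_eq (mul_comm _ _)

theorem choose_sq_le_mul_narayana (n k : ℕ) :
    (n.choose k : ℝ) ^ 2 ≤ (n + 1) * narayana (n + 1) (k + 1) := by
  have hle : n.choose k ^ 2 ≤ (n + 1).choose k * (n + 1).choose (k + 1) := by
    rw [sq, Nat.choose_succ_succ]
    exact Nat.mul_le_mul (Nat.choose_le_succ n k) (Nat.le_add_right _ _)
  rw [narayana, Nat.add_sub_cancel]
  push_cast
  rw [mul_div_cancel₀ _ (by positivity)]
  exact_mod_cast hle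

theorem betaPoly_succ (n : ℕ) (x : ℝ) :
    betaPoly (n + 1) x = ∑ k ∈ range (n + 1), narayana (n + 1) (k + 1) * x ^ (k + 1) := by
  rw [betaPoly, range_eq_Ico, sum_Ico_add' (fun ℓ => narayana (n + 1) ℓ * x ^ ℓ)]
  rfl

theorem one_add_pow_eq_sum_choose_mul_pow (m : ℕ) (t : ℝ) :
    (1 + t) ^ m = ∑ k ∈ range (m + 1), (m.choose k : ℝ) * t ^ k := by
  rw [add_comm, add_pow]
  exact sum_congr rfl fun k _ => by ring

theorem sum_sq_choose_mul_pow_le (m : ℕ) {t : ℝ} (ht : 0 ≤ t) :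
    ∑ k ∈ range (m + 1), ((m.choose k : ℝ) * t ^ k) ^ 2 ≤ (1 + t) ^ (2 * m) := by
  rw [mul_comm, pow_mul, one_add_pow_eq_sum_choose_mul_pow]
  exact sum_sq_le_sq_sum_of_nonneg fun k _ => by positivity

theorem one_add_pow_le_mul_sum_sq_choose_mul_pow (m : ℕ) (t : ℝ) :
    (1 + t) ^ (2 * m) ≤ (m + 1) * ∑ k ∈ range (m + 1), ((m.choose k : ℝ) * t ^ k) ^ 2 := by
  rw [mul_comm, pow_mul, one_add_pow_eq_sum_choose_mul_pow]
  simpa using sq_sum_le_card_mul_sum_sq (s := range (m + 1))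

theorem betaPoly_sq_le (m : ℕ) {t : ℝ} (ht : 0 ≤ t) :
    betaPoly m (t ^ 2) ≤ (1 + t) ^ (2 * m) :=
  calc betaPoly m (t ^ 2) ≤ ∑ ℓ ∈ Icc 1 m, ((m.choose ℓ : ℝ) * t ^ ℓ) ^ 2 := by
        refine sum_le_sum fun ℓ _ => ?_
        rw [mul_pow, ← pow_mul, mul_comm 2 ℓ, pow_mul]
        exact mul_le_mul_of_nonneg_right (narayana_le_choose_sq m ℓ) (by positivity)
    _ ≤ ∑ ℓ ∈ range (m + 1), ((m.choose ℓ : ℝ) * t ^ ℓ) ^ 2 :=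
        sum_le_sum_of_subset_of_nonneg
          (fun ℓ hℓ => mem_range.2 (Nat.lt_succ_of_le (mem_Icc.1 hℓ).2))
          fun _ _ _ => sq_nonneg _
    _ ≤ (1 + t) ^ (2 * m) := sum_sq_choose_mul_pow_le m ht

theorem sq_mul_one_add_pow_le_betaPoly (n : ℕ) (t : ℝ) :
    t ^ 2 * (1 + t) ^ (2 * n) ≤ (n + 1) ^ 2 * betaPoly (n + 1) (t ^ 2) :=
  calc t ^ 2 * (1 + t) ^ (2 * n)
      ≤ t ^ 2 * ((n + 1) * ∑ k ∈ range (n + 1), ((n.choose k : ℝ) * t ^ k) ^ 2) :=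
        mul_le_mul_of_nonneg_left (one_add_pow_le_mul_sum_sq_choose_mul_pow n t) (sq_nonneg t)
    _ = (n + 1) * ∑ k ∈ range (n + 1), (n.choose k : ℝ) ^ 2 * (t ^ 2) ^ (k + 1) := by
        rw [mul_left_comm, mul_sum]
        congr 1
        exact sum_congr rfl fun k _ => by ring
    _ ≤ (n + 1) * ∑ k ∈ range (n + 1), (n + 1) * narayana (n + 1) (k + 1) * (t ^ 2) ^ (k + 1) := by
        gcongr with k
        exact choose_sq_le_mul_narayana n k
    _ = (n + 1) ^ 2 * betaPoly (n + 1) (t ^ 2) := by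
        rw [betaPoly_succ, mul_sum, mul_sum]
        exact sum_congr rfl fun k _ => by ring

/-- For every real `x > 0` and every integer `m ≥ 1`,
`(x/(2m²(1+√x)³))·(1+√x)^{2m} ≤ β_m(x) ≤ (1+√x)^{2m}`. -/
theorem betaPoly_bounds (x : ℝ) (hx : 0 < x) (m : ℕ) (hm : 1 ≤ m) :
    x / (2 * (m : ℝ) ^ 2 * (1 + Real.sqrt x) ^ 3) * (1 + Real.sqrt x) ^ (2 * m) ≤ betaPoly m x ∧
    betaPoly m x ≤ (1 + Real.sqrt x) ^ (2 * m) := by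
  obtain ⟨n, rfl⟩ : ∃ n, m = n + 1 := ⟨m - 1, by omega⟩
  set t := Real.sqrt x
  have ht : 0 ≤ t := Real.sqrt_nonneg x
  have hxt : x = t ^ 2 := (Real.sq_sqrt hx.le).symm
  refine ⟨?_, hxt ▸ betaPoly_sq_le (n + 1) ht⟩
  have hlower := sq_mul_one_add_pow_le_betaPoly n t
  rw [← hxt] at hlower
  have hsq_le : (1 + t) ^ 2 ≤ 2 * (1 + t) ^ 3 := by nlinarith
  rw [div_mul_eq_mul_div, div_le_iff₀ (by positivity)]
  calc x * (1 + t) ^ (2 * (n + 1)) = x * (1 + t) ^ (2 * n) * (1 + t) ^ 2 := by ring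
    _ ≤ (n + 1) ^ 2 * betaPoly (n + 1) x * (1 + t) ^ 2 := by gcongr
    _ ≤ (n + 1) ^ 2 * betaPoly (n + 1) x * (2 * (1 + t) ^ 3) :=
        mul_le_mul_of_nonneg_left hsq_le (hlower.trans' (by positivity))
    _ = betaPoly (n + 1) x * (2 * ((n + 1 : ℕ) : ℝ) ^ 2 * (1 + t) ^ 3) := by push_cast; ring

end
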